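/- Let n ≥ 1, let O ⊂ ℍⁿ be an open set, let L : O × ℝ × ℝ²ⁿ → S^{2n×2n} be continuous, let F[ψ] = ∇²_{H,s}ψ + L(·,ψ,∇_Hψ), and let Σ be a non-empty open subset of S^{2n×2n}. Let 𝓕 be a family of viscosity supersolutions of F[ψ] ∈ ∂Σ in O, and set g(ξ) := inf{h(ξ) : h ∈ 𝓕} for ξ ∈ O. If the lower semicontinuous envelope g_* satisfies g_*(ξ) > −∞ for all ξ ∈ O, then g_* is a viscosity supersolution of F[ψ] ∈ ∂Σ in O. -/

import Mathlib

open Filter Topology Matrix Asymptotics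

noncomputable section

/-- Points of the Heisenberg group `ℍⁿ`: `(x, y, t) ∈ ℝⁿ × ℝⁿ × ℝ`. -/
abbrev Heis (n : ℕ) : Type := (Fin n → ℝ) × (Fin n → ℝ) × ℝ

/-- Index type for the `2n` horizontal directions. -/
abbrev HIdx (n : ℕ) : Type := Fin n ⊕ Fin n

/-- `2n × 2n` real matrices. -/
abbrev HMat (n : ℕ) : Type := Matrix (HIdx n) (HIdx n) ℝ

namespace Heis

variable {n : ℕ}

/-- The Heisenberg group law. -/
def hmul (ξ η : Heis n) : Heis n :=
  (ξ.1 + η.1, ξ.2.1 + η.2.1,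
    ξ.2.2 + η.2.2 + 2 * ∑ i, (ξ.2.1 i * η.1 i - ξ.1 i * η.2.1 i))

/-- The group inverse `ξ⁻¹ = -ξ`. -/
def hinv (ξ : Heis n) : Heis n := (-ξ.1, -ξ.2.1, -ξ.2.2)

/-- `|z|²` for `ξ = (z, t)`. -/
def zsq (ξ : Heis n) : ℝ := ∑ i, (ξ.1 i ^ 2 + ξ.2.1 i ^ 2)

/-- The homogeneous norm `|ξ|_H = (|z|⁴ + t²)^{1/4}`. -/
def hnorm (ξ : Heis n) : ℝ := (zsq ξ ^ 2 + ξ.2.2 ^ 2) ^ ((1 : ℝ) / 4)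

/-- The left-invariant horizontal vector fields `X_j` (for `Sum.inl j`)
and `Y_j` (for `Sum.inr j`), as tangent vectors at `ξ`. -/
def vecField (j : HIdx n) (ξ : Heis n) : Heis n :=
  match j with
  | Sum.inl j => (Pi.single j 1, 0, 2 * ξ.2.1 j)
  | Sum.inr j => (0, Pi.single j 1, -(2 * ξ.1 j))

/-- Horizontal (Heisenberg) gradient `∇_H ψ (ξ) ∈ ℝ^{2n}`. -/
def hGrad (ψ : Heis n → ℝ) (ξ : Heis n) : HIdx n → ℝ :=
  fun j => fderiv ℝ ψ ξ (vecField j ξ)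

/-- Heisenberg Hessian: entry `(i, j)` is `(field j)((field i) ψ)(ξ)`. -/
def hHess (ψ : Heis n → ℝ) (ξ : Heis n) : HMat n :=
  Matrix.of fun i j =>
    fderiv ℝ (fun η => fderiv ℝ ψ η (vecField i η)) ξ (vecField j ξ)

/-- Symmetrized Heisenberg Hessian `∇²_{H,s} ψ`. -/
def hHessSym (ψ : Heis n → ℝ) (ξ : Heis n) : HMat n :=
  ((1 : ℝ) / 2) • (hHess ψ ξ + (hHess ψ ξ)ᵀ)

/-- The standard symplectic matrix `J = [[0, Iₙ], [-Iₙ, 0]]`. -/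
def Jmat (n : ℕ) : HMat n :=
  Matrix.of fun i j =>
    match i, j with
    | Sum.inl a, Sum.inr b => if a = b then (1 : ℝ) else 0
    | Sum.inr a, Sum.inl b => if a = b then (-1 : ℝ) else 0
    | _, _ => 0

/-- Euclidean norm of `p ∈ ℝ^{2n}`. -/
def pnorm (p : HIdx n → ℝ) : ℝ := Real.sqrt (∑ j, p j ^ 2)

/-- The Loewner (positive semidefinite) order on matrices. -/
def matLE (A B : HMat n) : Prop := (B - A).PosSemidef

/-- The operator `F[ψ] = ∇²_{H,s} ψ + L(·, ψ, ∇_H ψ)`. -/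
def Fop (L : Heis n → ℝ → (HIdx n → ℝ) → HMat n) (ψ : Heis n → ℝ) (ξ : Heis n) : HMat n :=
  hHessSym ψ ξ + L ξ (ψ ξ) (hGrad ψ ξ)

/-- Viscosity subsolution of `F[ψ] ∈ ∂Σ` in `Ω`: `F[ψ] ∈ closure Σ`
in the viscosity sense. -/
def IsSubsolution (Ω : Set (Heis n)) (L : Heis n → ℝ → (HIdx n → ℝ) → HMat n)
    (S : Set (HMat n)) (v : Heis n → EReal) : Prop :=
  ∀ ξ₀ ∈ Ω, ∀ φ : Heis n → ℝ, ContDiffOn ℝ 2 φ Ω → v ξ₀ = ((φ ξ₀ : ℝ) : EReal) →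
    (∀ᶠ η in nhds ξ₀, η ∈ Ω → v η ≤ ((φ η : ℝ) : EReal)) →
    Fop L φ ξ₀ ∈ closure S

/-- Viscosity supersolution of `F[ψ] ∈ ∂Σ` in `Ω`: `F[ψ] ∈ S^{2n×2n} ∖ Σ`
in the viscosity sense. -/
def IsSupersolution (Ω : Set (Heis n)) (L : Heis n → ℝ → (HIdx n → ℝ) → HMat n)
    (S : Set (HMat n)) (w : Heis n → EReal) : Prop :=
  ∀ ξ₀ ∈ Ω, ∀ φ : Heis n → ℝ, ContDiffOn ℝ 2 φ Ω → w ξ₀ = ((φ ξ₀ : ℝ) : EReal) →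
    (∀ᶠ η in nhds ξ₀, η ∈ Ω → ((φ η : ℝ) : EReal) ≤ w η) →
    Fop L φ ξ₀ ∉ S

/-- The class `USC(s)`: upper semicontinuous, valued in `ℝ ∪ {-∞}`, not identically `-∞`. -/
def USCFun (s : Set (Heis n)) (v : Heis n → EReal) : Prop :=
  UpperSemicontinuousOn v s ∧ (∀ ξ ∈ s, v ξ ≠ ⊤) ∧ (∃ ξ ∈ s, v ξ ≠ ⊥)

/-- The class `LSC(s)`: lower semicontinuous, valued in `ℝ ∪ {+∞}`, not identically `+∞`. -/
def LSCFun (s : Set (Heis n)) (w : Heis n → EReal) : Prop :=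
  LowerSemicontinuousOn w s ∧ (∀ ξ ∈ s, w ξ ≠ ⊥) ∧ (∃ ξ ∈ s, w ξ ≠ ⊤)

/-- `Σ` is (relatively) open as a subset of the space of symmetric matrices. -/
def RelOpen (S : Set (HMat n)) : Prop :=
  IsOpen {A : {M : HMat n // M.IsSymm} | A.1 ∈ S}

/-- The quadratic lower-order term
`L(ξ,s,p) = α(ξ,s) p⊗p - γ(ξ,s) Jp⊗Jp - β(ξ,s)|p|² I₂ₙ`. -/
def Lquad (α β γ : Heis n → ℝ → ℝ) : Heis n → ℝ → (HIdx n → ℝ) → HMat n :=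
  fun ξ s p =>
    α ξ s • vecMulVec p p - γ ξ s • vecMulVec (Jmat n *ᵥ p) (Jmat n *ᵥ p)
      - (β ξ s * ∑ j, p j ^ 2) • (1 : HMat n)

/-- The quadratic lower-order term with constant coefficients
`L(s,p) = a p⊗p - c Jp⊗Jp - b|p|² I₂ₙ`. -/
def LquadC (a b c : ℝ) : Heis n → ℝ → (HIdx n → ℝ) → HMat n :=
  fun _ _ p =>
    a • vecMulVec p p - c • vecMulVec (Jmat n *ᵥ p) (Jmat n *ᵥ p)
      - (b * ∑ j, p j ^ 2) • (1 : HMat n)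

/-- Locally Lipschitz on a set. -/
def LocallyLipschitzOnSet {X : Type*} [PseudoMetricSpace X] (s : Set X) (f : X → ℝ) : Prop :=
  ∀ x ∈ s, ∃ K : NNReal, ∃ t ∈ nhdsWithin x s, LipschitzOnWith K f t

/-- All entries of `L(ξ,s,·)` are differentiable at `p`. -/
def DiffInP (L : Heis n → ℝ → (HIdx n → ℝ) → HMat n) (ξ : Heis n) (s : ℝ)
    (p : HIdx n → ℝ) : Prop :=
  ∀ i j, DifferentiableAt ℝ (fun q => L ξ s q i j) p

/-- All entries of `L(·,s,p)` are differentiable at `ξ`. -/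
def DiffInXi (L : Heis n → ℝ → (HIdx n → ℝ) → HMat n) (ξ : Heis n) (s : ℝ)
    (p : HIdx n → ℝ) : Prop :=
  ∀ i j, DifferentiableAt ℝ (fun η => L η s p i j) ξ

/-- A norm of `∇_p L(ξ,s,p)`. -/
def pGradNorm (L : Heis n → ℝ → (HIdx n → ℝ) → HMat n) (ξ : Heis n) (s : ℝ)
    (p : HIdx n → ℝ) : ℝ :=
  Real.sqrt (∑ i, ∑ j, ∑ k, (fderiv ℝ (fun q => L ξ s q i j) p (Pi.single k 1)) ^ 2)

/-- A norm of `∇_ξ L(ξ,s,p)`. -/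
def xiGradNorm (L : Heis n → ℝ → (HIdx n → ℝ) → HMat n) (ξ : Heis n) (s : ℝ)
    (p : HIdx n → ℝ) : ℝ :=
  Real.sqrt (∑ i : HIdx n, ∑ j : HIdx n, ‖fderiv ℝ (fun η => L η s p i j) ξ‖ ^ 2)

/-- The matrix `p · ∇_p L(ξ,s,p)`. -/
def pDotGradL (L : Heis n → ℝ → (HIdx n → ℝ) → HMat n) (ξ : Heis n) (s : ℝ)
    (p : HIdx n → ℝ) : HMat n :=
  Matrix.of fun i j => fderiv ℝ (fun q => L ξ s q i j) p p

/-- Structural condition (3.3): `|∇_ξ L(ξ,s,p)| ≤ C|p|^m` and `|∇_p L(ξ,s,p)| ≤ C|p|`. -/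
def Cond33 (Ω : Set (Heis n)) (L : Heis n → ℝ → (HIdx n → ℝ) → HMat n) (m : ℝ) : Prop :=
  ∀ R : ℝ, 0 < R → ∃ C : ℝ, 0 < C ∧ ∀ ξ ∈ Ω, ∀ s : ℝ, |s| ≤ R → ∀ p : HIdx n → ℝ,
    (DiffInXi L ξ s p → xiGradNorm L ξ s p ≤ C * pnorm p ^ m) ∧
    (DiffInP L ξ s p → pGradNorm L ξ s p ≤ C * pnorm p)

/-- Structural condition (3.4): `0 ≤ L(ξ,s',p) - L(ξ,s,p) ≤ C(s'-s)|p|^m I₂ₙ`. -/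
def Cond34 (Ω : Set (Heis n)) (L : Heis n → ℝ → (HIdx n → ℝ) → HMat n) (m : ℝ) : Prop :=
  ∀ R : ℝ, 0 < R → ∃ C : ℝ, 0 < C ∧ ∀ ξ ∈ Ω, ∀ s s' : ℝ, -R ≤ s → s ≤ s' → s' ≤ R →
    ∀ p : HIdx n → ℝ,
      matLE 0 (L ξ s' p - L ξ s p) ∧
      matLE (L ξ s' p - L ξ s p) ((C * (s' - s) * pnorm p ^ m) • (1 : HMat n))

/-- The second inequality of condition (3.4): `L(ξ,s',p) - L(ξ,s,p) ≤ C(s'-s)|p|^m I₂ₙ`. -/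
def Cond34Upper (Ω : Set (Heis n)) (L : Heis n → ℝ → (HIdx n → ℝ) → HMat n) (m : ℝ) : Prop :=
  ∀ R : ℝ, 0 < R → ∃ C : ℝ, 0 < C ∧ ∀ ξ ∈ Ω, ∀ s s' : ℝ, -R ≤ s → s ≤ s' → s' ≤ R →
    ∀ p : HIdx n → ℝ,
      matLE (L ξ s' p - L ξ s p) ((C * (s' - s) * pnorm p ^ m) • (1 : HMat n))

/-- Structural condition (3.5). -/
def Cond35 (Ω : Set (Heis n)) (L : Heis n → ℝ → (HIdx n → ℝ) → HMat n) (m : ℝ) : Prop :=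
  ∀ R : ℝ, 0 < R → ∀ Λ : ℝ, 0 < Λ → ∃ θb : ℝ, 0 < θb ∧ ∃ C : ℝ, 0 < C ∧
    ∀ θ : ℝ, 0 ≤ θ → θ ≤ θb → ∀ ξ ∈ Ω, ∀ s : ℝ, |s| ≤ R → ∀ p : HIdx n → ℝ,
      DiffInP L ξ s p →
      matLE (pDotGradL L ξ s p - L ξ s p + (θ * Λ * pGradNorm L ξ s p) • (1 : HMat n)
              - θ • (1 : HMat n))
            (C • vecMulVec p p - ((1 / C) * pnorm p ^ m) • (1 : HMat n))

/-- Structural condition (3.7). -/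
def Cond37 (Ω : Set (Heis n)) (L : Heis n → ℝ → (HIdx n → ℝ) → HMat n) (m : ℝ) : Prop :=
  ∀ R : ℝ, 0 < R → ∀ Λ : ℝ, 0 < Λ → ∃ θb : ℝ, 0 < θb ∧ ∃ C : ℝ, 0 < C ∧
    ∀ θ : ℝ, 0 < θ → θ ≤ θb → ∀ ξ ∈ Ω, ∀ s : ℝ, |s| ≤ R → ∀ p : HIdx n → ℝ,
      DiffInP L ξ s p →
      matLE ((-C) • vecMulVec p p + ((1 / C) * pnorm p ^ m) • (1 : HMat n))
            (pDotGradL L ξ s p - L ξ s p - (θ * Λ * pGradNorm L ξ s p) • (1 : HMat n)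
              + θ • (1 : HMat n))

/-- `P` is a second-order Taylor witness for `u` at `ξ`: `u` is punctually second order
differentiable at `ξ` with expansion given by the `C²` function `P`. -/
def PunctualWitness (u P : Heis n → ℝ) (ξ : Heis n) : Prop :=
  ContDiff ℝ 2 P ∧ P ξ = u ξ ∧
    (fun η => u η - P η) =o[nhds ξ] (fun η => ‖η - ξ‖ ^ 2)

/-- The `ε`-lower envelope `w_ε`. -/
def lowerEnv (Ω : Set (Heis n)) (w : Heis n → EReal) (ε : ℝ) (ξ : Heis n) : EReal :=
  ⨅ η ∈ closure Ω, (w η + (((1 / ε) * hnorm (hmul (hinv η) ξ) ^ 4 : ℝ) : EReal))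

/-- The `ε`-upper envelope `v^ε`. -/
def upperEnv (Ω : Set (Heis n)) (v : Heis n → EReal) (ε : ℝ) (ξ : Heis n) : EReal :=
  ⨆ η ∈ closure Ω, (v η - (((1 / ε) * hnorm (hmul (hinv η) ξ) ^ 4 : ℝ) : EReal))

/-- The `ε`-lower envelope, as a real valued function. -/
def lowerEnvR (Ω : Set (Heis n)) (w : Heis n → EReal) (ε : ℝ) (ξ : Heis n) : ℝ :=
  (lowerEnv Ω w ε ξ).toReal

/-- The `ε`-upper envelope, as a real valued function. -/
def upperEnvR (Ω : Set (Heis n)) (v : Heis n → EReal) (ε : ℝ) (ξ : Heis n) : ℝ :=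
  (upperEnv Ω v ε ξ).toReal

/-- The lower semicontinuous envelope `g_*` relative to `O`. -/
def lscEnv (O : Set (Heis n)) (g : Heis n → EReal) (ξ : Heis n) : EReal :=
  ⨆ (r : ℝ) (_ : 0 < r), ⨅ η ∈ O ∩ Metric.ball ξ r, g η

/-- The upper semicontinuous envelope `g^*` relative to `O`. -/
def uscEnv (O : Set (Heis n)) (g : Heis n → EReal) (ξ : Heis n) : EReal :=
  ⨅ (r : ℝ) (_ : 0 < r), ⨆ η ∈ O ∩ Metric.ball ξ r, g η

end Heis

open Heis

open Set in
lemma lsc_exists_min {α : Type*} [TopologicalSpace α] {K : Set α} (hK : IsCompact K)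
    (hKc : IsClosed K) (hne : K.Nonempty) {f : α → EReal} (hf : LowerSemicontinuousOn f K) :
    ∃ x ∈ K, ∀ y ∈ K, f x ≤ f y := by
  classical
  set F : α → EReal := fun x => if x ∈ K then f x else ⊤ with hF
  have hFlsc : LowerSemicontinuous F := by
    intro x b hb
    by_cases hx : x ∈ K
    · have hbf : b < f x := by simpa [hF, hx] using hb
      have := hf x hx b hbf
      rw [eventually_nhdsWithin_iff] at this
      filter_upwards [this] with y hy
      by_cases hyK : y ∈ K
      · simpa [hF, hyK] using hy hyK
      · simp only [hF, hyK, if_false]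
        exact lt_of_lt_of_le hbf le_top
    · have : ∀ᶠ y in nhds x, y ∈ Kᶜ := hKc.isOpen_compl.eventually_mem hx
      filter_upwards [this] with y hy
      simp only [hF, (by simpa using hy : ¬ y ∈ K), if_false]
      exact (by simpa [hF, hx] using hb : b < ⊤)
  by_cases hm : (⨅ x ∈ K, f x) = ⊤
  · obtain ⟨x0, hx0⟩ := hne
    refine ⟨x0, hx0, fun y hy => ?_⟩
    have : f y = ⊤ := by
      have := (iInf_eq_top.1 hm) y
      simpa using (iInf_eq_top.1 this) hy
    simp [this]
  · set m := ⨅ x ∈ K, f x with hmdef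
    set ι := {a : EReal // m < a} with hι
    have hιne : Nonempty ι := ⟨⟨⊤, lt_top_iff_ne_top.2 hm⟩⟩
    set Z : ι → Set α := fun a => F ⁻¹' Iic a.1 ∩ K with hZ
    have hZclosed : ∀ a, IsClosed (Z a) := fun a =>
      (hFlsc.isClosed_preimage a.1).inter hKc
    have hZcompact : ∀ a, IsCompact (Z a) :=
      fun a => hK.of_isClosed_subset (hZclosed a) inter_subset_right
    have hZne : ∀ a, (Z a).Nonempty := by
      rintro ⟨a, ha⟩
      by_contra hcon
      rw [Set.not_nonempty_iff_eq_empty] at hcon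
      have hle : a ≤ m := by
        refine le_iInf₂ fun x hx => ?_
        by_contra hlt
        push_neg at hlt
        have hxZ : x ∈ Z ⟨a, ha⟩ := ⟨by simp [hF, hx, hlt.le], hx⟩
        rw [hcon] at hxZ
        exact hxZ
      exact absurd hle (not_le.2 ha)
    obtain ⟨x, hx⟩ := IsCompact.nonempty_iInter_of_directed_nonempty_isCompact_isClosed Z
      (fun a b => ⟨⟨min a.1 b.1, lt_min a.2 b.2⟩,
        fun y hy => ⟨Set.mem_preimage.2 (Set.mem_Iic.2
          (le_trans (Set.mem_Iic.1 (Set.mem_preimage.1 hy.1)) (min_le_left _ _))), hy.2⟩,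
        fun y hy => ⟨Set.mem_preimage.2 (Set.mem_Iic.2
          (le_trans (Set.mem_Iic.1 (Set.mem_preimage.1 hy.1)) (min_le_right _ _))), hy.2⟩⟩)
      hZne hZcompact hZclosed
    have hxK : x ∈ K := (Set.mem_iInter.1 hx ⟨⊤, lt_top_iff_ne_top.2 hm⟩).2
    have hfm : f x ≤ m := by
      refine le_of_forall_gt_imp_ge_of_dense fun a ha => ?_
      have := (Set.mem_iInter.1 hx ⟨a, ha⟩).1
      simpa [hF, hxK] using this
    exact ⟨x, hxK, fun y hy => hfm.trans (iInf₂_le y hy)⟩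

section Aux
variable {n : ℕ}

lemma vecField_contDiff (j : HIdx n) : ContDiff ℝ ⊤ (vecField j : Heis n → Heis n) := by
  cases j with
  | inl j =>
    show ContDiff ℝ ⊤ (fun ξ : Heis n => ((Pi.single j 1 : Fin n → ℝ), (0 : Fin n → ℝ),
      2 * ξ.2.1 j))
    fun_prop
  | inr j =>
    show ContDiff ℝ ⊤ (fun ξ : Heis n => ((0 : Fin n → ℝ), (Pi.single j 1 : Fin n → ℝ),
      -(2 * ξ.1 j)))
    fun_prop

lemma hGrad_continuousOn {O : Set (Heis n)} (hO : IsOpen O) {ψ : Heis n → ℝ}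
    (hψ : ContDiffOn ℝ 2 ψ O) : ContinuousOn (hGrad ψ) O := by
  apply continuousOn_pi.2
  intro j
  exact (hψ.continuousOn_fderiv_of_isOpen hO (by norm_num)).clm_apply
    (vecField_contDiff j).continuous.continuousOn

lemma hInner_contDiffOn {O : Set (Heis n)} (hO : IsOpen O) {ψ : Heis n → ℝ}
    (hψ : ContDiffOn ℝ 2 ψ O) (i : HIdx n) :
    ContDiffOn ℝ 1 (fun η => fderiv ℝ ψ η (vecField i η)) O :=
  (hψ.fderiv_of_isOpen hO (by norm_num)).clm_apply
    ((vecField_contDiff i).of_le le_top).contDiffOn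

lemma hHess_continuousOn {O : Set (Heis n)} (hO : IsOpen O) {ψ : Heis n → ℝ}
    (hψ : ContDiffOn ℝ 2 ψ O) : ContinuousOn (hHess ψ) O := by
  apply continuousOn_pi.2
  intro i
  apply continuousOn_pi.2
  intro j
  exact ((hInner_contDiffOn hO hψ i).continuousOn_fderiv_of_isOpen hO le_rfl).clm_apply
    (vecField_contDiff j).continuous.continuousOn

end Aux

section Aux2
variable {n : ℕ}

lemma hGrad_sub_add_const {O : Set (Heis n)} (hO : IsOpen O) {φ ψ : Heis n → ℝ}
    (hφ : ContDiffOn ℝ 2 φ O) (hψ : ContDiff ℝ 2 ψ) (c : ℝ) {ξ : Heis n} (hξ : ξ ∈ O) :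
    hGrad (fun x => φ x - ψ x + c) ξ = hGrad φ ξ - hGrad ψ ξ := by
  funext j
  have hdφ : DifferentiableAt ℝ φ ξ :=
    (hφ.differentiableOn (by norm_num)).differentiableAt (hO.mem_nhds hξ)
  have hdψ : DifferentiableAt ℝ ψ ξ := (hψ.differentiable (by norm_num)).differentiableAt
  simp only [hGrad, Pi.sub_apply]
  rw [fderiv_add_const, fderiv_fun_sub hdφ hdψ]
  simp

lemma innerDeriv_contDiff {ψ : Heis n → ℝ} (hψ : ContDiff ℝ ⊤ ψ) (i : HIdx n) :
    ContDiff ℝ 1 (fun η => fderiv ℝ ψ η (vecField i η)) :=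
  (hψ.fderiv_right le_top).clm_apply ((vecField_contDiff i).of_le le_top)

lemma hHess_sub_add_const {O : Set (Heis n)} (hO : IsOpen O) {φ ψ : Heis n → ℝ}
    (hφ : ContDiffOn ℝ 2 φ O) (hψ : ContDiff ℝ ⊤ ψ) (c : ℝ) {ξ : Heis n} (hξ : ξ ∈ O) :
    hHess (fun x => φ x - ψ x + c) ξ = hHess φ ξ - hHess ψ ξ := by
  ext i j
  have hOmem := hO.mem_nhds hξ
  have hEq : (fun η => fderiv ℝ (fun x => φ x - ψ x + c) η (vecField i η))
      =ᶠ[nhds ξ] (fun η => fderiv ℝ φ η (vecField i η) - fderiv ℝ ψ η (vecField i η)) := by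
    filter_upwards [hO.eventually_mem hξ] with η hη
    have hdφ : DifferentiableAt ℝ φ η :=
      (hφ.differentiableOn (by norm_num)).differentiableAt (hO.mem_nhds hη)
    have hdψ : DifferentiableAt ℝ ψ η := (hψ.differentiable (by simp)).differentiableAt
    rw [fderiv_add_const, fderiv_fun_sub hdφ hdψ]
    simp
  have hd1 : DifferentiableAt ℝ (fun η => fderiv ℝ φ η (vecField i η)) ξ :=
    ((hInner_contDiffOn hO hφ i).differentiableOn one_ne_zero).differentiableAt hOmem
  have hd2 : DifferentiableAt ℝ (fun η => fderiv ℝ ψ η (vecField i η)) ξ :=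
    ((innerDeriv_contDiff hψ i).differentiable one_ne_zero).differentiableAt
  show fderiv ℝ _ ξ (vecField j ξ) = _
  rw [hEq.fderiv_eq, fderiv_fun_sub hd1 hd2]
  simp [hHess]

/-- squared Euclidean distance to `a`. -/
def Nfun (a : Heis n) (η : Heis n) : ℝ :=
  (∑ i, (η.1 i - a.1 i) ^ 2) + (∑ i, (η.2.1 i - a.2.1 i) ^ 2) + (η.2.2 - a.2.2) ^ 2

/-- the quartic bump `|η - a|⁴`. -/
def qfun (a : Heis n) (η : Heis n) : ℝ := Nfun a η * Nfun a η

lemma Nfun_contDiff (a : Heis n) : ContDiff ℝ ⊤ (Nfun a) := by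
  unfold Nfun
  apply ContDiff.add
  apply ContDiff.add
  · exact ContDiff.sum fun i _ => by fun_prop
  · exact ContDiff.sum fun i _ => by fun_prop
  · fun_prop

lemma qfun_contDiff (a : Heis n) : ContDiff ℝ ⊤ (qfun a) := by
  unfold qfun; exact (Nfun_contDiff a).mul (Nfun_contDiff a)

lemma Nfun_nonneg (a η : Heis n) : 0 ≤ Nfun a η := by
  unfold Nfun; positivity

lemma qfun_nonneg (a η : Heis n) : 0 ≤ qfun a η :=
  mul_nonneg (Nfun_nonneg a η) (Nfun_nonneg a η)

lemma Nfun_self (a : Heis n) : Nfun a a = 0 := by simp [Nfun]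

lemma qfun_self (a : Heis n) : qfun a a = 0 := by simp [qfun, Nfun_self]

lemma dist_sq_le_Nfun (a η : Heis n) : dist η a ^ 2 ≤ Nfun a η := by
  have h0 : 0 ≤ Nfun a η := Nfun_nonneg a η
  have hsq : ∀ x : ℝ, x ^ 2 ≤ Nfun a η → |x| ≤ Real.sqrt (Nfun a η) := fun x hx => by
    rw [← Real.sqrt_sq_eq_abs]; exact Real.sqrt_le_sqrt hx
  have hd : dist η a ≤ Real.sqrt (Nfun a η) := by
    rw [Prod.dist_eq]
    apply max_le
    · refine (dist_pi_le_iff (Real.sqrt_nonneg _)).2 fun i => ?_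
      rw [Real.dist_eq]
      refine hsq _ ?_
      have h1 := Finset.single_le_sum (f := fun i => (η.1 i - a.1 i) ^ 2)
        (fun i _ => sq_nonneg _) (Finset.mem_univ i)
      have h1' : (η.1 i - a.1 i) ^ 2 ≤ ∑ x, (η.1 x - a.1 x) ^ 2 := h1
      have h2 : (0:ℝ) ≤ ∑ i, (η.2.1 i - a.2.1 i) ^ 2 :=
        Finset.sum_nonneg fun _ _ => sq_nonneg _
      have h3 := sq_nonneg (η.2.2 - a.2.2)
      unfold Nfun; linarith
    · rw [Prod.dist_eq]
      apply max_le
      · refine (dist_pi_le_iff (Real.sqrt_nonneg _)).2 fun i => ?_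
        rw [Real.dist_eq]
        refine hsq _ ?_
        have h1 := Finset.single_le_sum (f := fun i => (η.2.1 i - a.2.1 i) ^ 2)
          (fun i _ => sq_nonneg _) (Finset.mem_univ i)
        have h1' : (η.2.1 i - a.2.1 i) ^ 2 ≤ ∑ x, (η.2.1 x - a.2.1 x) ^ 2 := h1
        have h2 : (0:ℝ) ≤ ∑ i, (η.1 i - a.1 i) ^ 2 :=
          Finset.sum_nonneg fun _ _ => sq_nonneg _
        have h3 := sq_nonneg (η.2.2 - a.2.2)
        unfold Nfun; linarith
      · rw [Real.dist_eq]
        refine hsq _ ?_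
        have h1 : (0:ℝ) ≤ ∑ i, (η.1 i - a.1 i) ^ 2 :=
          Finset.sum_nonneg fun _ _ => sq_nonneg _
        have h2 : (0:ℝ) ≤ ∑ i, (η.2.1 i - a.2.1 i) ^ 2 :=
          Finset.sum_nonneg fun _ _ => sq_nonneg _
        unfold Nfun; linarith
  calc dist η a ^ 2 ≤ Real.sqrt (Nfun a η) ^ 2 :=
        pow_le_pow_left₀ dist_nonneg hd 2
    _ = Nfun a η := Real.sq_sqrt h0

lemma dist_pow_four_le_qfun (a η : Heis n) : dist η a ^ 4 ≤ qfun a η := by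
  have h := dist_sq_le_Nfun a η
  have h2 : dist η a ^ 4 = dist η a ^ 2 * dist η a ^ 2 := by ring
  rw [h2, qfun]
  exact mul_le_mul h h (sq_nonneg _) (Nfun_nonneg a η)

lemma fderiv_Nfun_self (a : Heis n) : fderiv ℝ (Nfun a) a = 0 := by
  have : IsLocalMin (Nfun a) a :=
    Filter.Eventually.of_forall fun x => by rw [Nfun_self]; exact Nfun_nonneg a x
  exact this.fderiv_eq_zero

lemma fderiv_qfun_self (a : Heis n) : fderiv ℝ (qfun a) a = 0 := by
  have : IsLocalMin (qfun a) a :=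
    Filter.Eventually.of_forall fun x => by rw [qfun_self]; exact qfun_nonneg a x
  exact this.fderiv_eq_zero

lemma hGrad_qfun_self (a : Heis n) : hGrad (qfun a) a = 0 := by
  funext j
  simp [hGrad, fderiv_qfun_self]

lemma hHess_qfun_self (a : Heis n) : hHess (qfun a) a = 0 := by
  ext i j
  have hN := Nfun_contDiff a
  have hNd : Differentiable ℝ (Nfun a) := hN.differentiable (by simp)
  set m : Heis n → ℝ := fun η => fderiv ℝ (Nfun a) η (vecField i η) with hm
  have hmC : ContDiff ℝ 1 m := innerDeriv_contDiff hN i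
  have hma : m a = 0 := by simp [hm, fderiv_Nfun_self]
  have hGeq : (fun η => fderiv ℝ (qfun a) η (vecField i η))
      = fun η => Nfun a η * m η + Nfun a η * m η := by
    funext η
    show fderiv ℝ (fun x => Nfun a x * Nfun a x) η (vecField i η) = _
    rw [fderiv_fun_mul (hNd η) (hNd η)]
    simp [hm, smul_eq_mul]
  have hfd : fderiv ℝ (fun η => fderiv ℝ (qfun a) η (vecField i η)) a = 0 := by
    rw [hGeq]
    have hd1 : DifferentiableAt ℝ (fun η => Nfun a η * m η) a :=
      (hNd a).mul ((hmC.differentiable one_ne_zero) a)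
    rw [fderiv_fun_add hd1 hd1, fderiv_fun_mul (hNd a) ((hmC.differentiable one_ne_zero) a)]
    simp [Nfun_self, hma]
  show fderiv ℝ _ a (vecField j a) = _
  rw [hfd]
  simp

end Aux2

/-- Lemma 4.1: the lower semicontinuous envelope of an infimum of a family of
viscosity supersolutions is a viscosity supersolution. -/
theorem inf_of_supersolutions_lsc_envelope_is_supersolution
    {n : ℕ} (hn : 1 ≤ n)
    (O : Set (Heis n)) (hOopen : IsOpen O)
    (L : Heis n → ℝ → (HIdx n → ℝ) → HMat n)
    (hLsymm : ∀ ξ s p, (L ξ s p).IsSymm)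
    (hLcont : ∀ i j : HIdx n, ContinuousOn
      (fun q : Heis n × ℝ × (HIdx n → ℝ) => L q.1 q.2.1 q.2.2 i j)
      (O ×ˢ (Set.univ : Set (ℝ × (HIdx n → ℝ)))))
    (S : Set (HMat n)) (hSne : S.Nonempty) (hSsymm : ∀ A ∈ S, A.IsSymm)
    (hSopen : RelOpen S)
    (𝓕 : Set (Heis n → EReal))
    (h𝓕 : ∀ h ∈ 𝓕, LSCFun O h ∧ IsSupersolution O L S h)
    (hgne : ∀ ξ ∈ O, lscEnv O (fun η => ⨅ h ∈ 𝓕, h η) ξ ≠ ⊥) :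
    IsSupersolution O L S (lscEnv O (fun η => ⨅ h ∈ 𝓕, h η)) := by
  intro ξ₀ hξ₀ φ hφ heq htouch hmem
  set g : Heis n → EReal := fun η => ⨅ h ∈ 𝓕, h η with hg
  set w : Heis n → EReal := lscEnv O g with hw
  set m0 : ℝ := φ ξ₀ with hm0
  -- basic order facts
  have hwle : ∀ η ∈ O, w η ≤ g η := by
    intro η hη
    simp only [hw, lscEnv]
    exact iSup₂_le fun r hr => iInf₂_le η ⟨hη, Metric.mem_ball_self hr⟩
  have hhw : ∀ h ∈ 𝓕, ∀ η ∈ O, w η ≤ h η := by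
    intro h hh η hη
    exact (hwle η hη).trans (iInf₂_le h hh)
  -- Step 1 : the continuity argument, producing δ
  set A : Heis n → HMat n := fun η => hHess φ η - hHess (qfun ξ₀) η with hA
  set P : Heis n → HIdx n → ℝ := fun η => hGrad φ η - hGrad (qfun ξ₀) η with hP
  set Φ : Heis n × ℝ → HMat n := fun p =>
    ((1:ℝ)/2) • (A p.1 + (A p.1)ᵀ) + L p.1 (φ p.1 - qfun ξ₀ p.1 + p.2) (P p.1) with hΦ
  have hq2 : ContDiffOn ℝ 2 (qfun ξ₀) O := ((qfun_contDiff ξ₀).of_le le_top).contDiffOn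
  have hAcont : ContinuousOn A O :=
    (hHess_continuousOn hOopen hφ).sub (hHess_continuousOn hOopen hq2)
  have hPcont : ContinuousOn P O :=
    (hGrad_continuousOn hOopen hφ).sub (hGrad_continuousOn hOopen hq2)
  have hΦcont : ContinuousOn Φ (O ×ˢ (Set.univ : Set ℝ)) := by
    have hfst : ContinuousOn (fun p : Heis n × ℝ => p.1) (O ×ˢ (Set.univ : Set ℝ)) :=
      continuous_fst.continuousOn
    have hmapsto : ∀ p ∈ O ×ˢ (Set.univ : Set ℝ), p.1 ∈ O := fun p hp => hp.1
    apply ContinuousOn.add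
    · have h1 : ContinuousOn (fun p : Heis n × ℝ => A p.1) (O ×ˢ (Set.univ : Set ℝ)) :=
        hAcont.comp hfst hmapsto
      have h2 : ContinuousOn (fun p : Heis n × ℝ => (A p.1)ᵀ) (O ×ˢ (Set.univ : Set ℝ)) := by
        apply continuousOn_pi.2; intro i; apply continuousOn_pi.2; intro j
        exact (continuousOn_pi.1 ((continuousOn_pi.1 h1) j)) i
      exact (h1.add h2).const_smul ((1:ℝ)/2)
    · have hs : ContinuousOn (fun p : Heis n × ℝ => φ p.1 - qfun ξ₀ p.1 + p.2)
          (O ×ˢ (Set.univ : Set ℝ)) := by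
        apply ContinuousOn.add
        · exact (hφ.continuousOn.sub ((qfun_contDiff ξ₀).continuous.continuousOn)).comp
            hfst hmapsto
        · exact continuous_snd.continuousOn
      have hmap : ContinuousOn
          (fun p : Heis n × ℝ => (p.1, (φ p.1 - qfun ξ₀ p.1 + p.2, P p.1)))
          (O ×ˢ (Set.univ : Set ℝ)) :=
        hfst.prodMk (hs.prodMk (hPcont.comp hfst hmapsto))
      apply continuousOn_pi.2; intro i; apply continuousOn_pi.2; intro j
      exact ((hLcont i j).comp hmap (fun p hp => ⟨hp.1, trivial⟩))
  have hΦsymm : ∀ p : Heis n × ℝ, (Φ p).IsSymm := by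
    intro p
    apply Matrix.IsSymm.add
    · show (((1:ℝ)/2) • (A p.1 + (A p.1)ᵀ))ᵀ = _
      rw [Matrix.transpose_smul, Matrix.transpose_add, Matrix.transpose_transpose, add_comm]
    · exact hLsymm _ _ _
  have hΦval : Φ (ξ₀, 0) = Fop L φ ξ₀ := by
    simp only [hΦ, hA, hP, Fop, hHessSym, hHess_qfun_self, hGrad_qfun_self, qfun_self]
    simp
  have hnhds : {p : Heis n × ℝ | Φ p ∈ S} ∈ nhds ((ξ₀ : Heis n), (0:ℝ)) := by
    have hcontat : ContinuousAt Φ (ξ₀, 0) :=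
      hΦcont.continuousAt (IsOpen.mem_nhds (hOopen.prod isOpen_univ) ⟨hξ₀, trivial⟩)
    obtain ⟨U, hUopen, hUeq⟩ := isOpen_induced_iff.1 hSopen
    have hiff : ∀ M : HMat n, M.IsSymm → (M ∈ U ↔ M ∈ S) := by
      intro M hM
      have := Set.ext_iff.1 hUeq ⟨M, hM⟩
      simpa using this
    have hpre : Φ ⁻¹' U ∈ nhds ((ξ₀ : Heis n), (0:ℝ)) :=
      hcontat.preimage_mem_nhds (hUopen.mem_nhds
        ((hiff _ (hΦsymm _)).2 (hΦval ▸ hmem)))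
    filter_upwards [hpre] with p hp
    exact (hiff _ (hΦsymm p)).1 hp
  obtain ⟨δ, hδpos, hδ⟩ := Metric.mem_nhds_iff.1 hnhds
  -- Step 2 : choose r
  obtain ⟨r₁, hr₁pos, hr₁⟩ := Metric.eventually_nhds_iff_ball.1 htouch
  obtain ⟨r₂, hr₂pos, hr₂⟩ := Metric.isOpen_iff.1 hOopen ξ₀ hξ₀
  set r : ℝ := min (min r₁ r₂) δ / 2 with hrdef
  have hrpos : 0 < r := by
    have := lt_min (lt_min hr₁pos hr₂pos) hδpos
    positivity
  set K := Metric.closedBall ξ₀ r with hKdef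
  have hKball : K ⊆ Metric.ball ξ₀ (min (min r₁ r₂) δ) :=
    Metric.closedBall_subset_ball (by
      have := lt_min (lt_min hr₁pos hr₂pos) hδpos
      rw [hrdef]; linarith)
  have hKO : K ⊆ O := fun η hη =>
    hr₂ (Metric.ball_subset_ball ((min_le_left _ _).trans (min_le_right _ _)) (hKball hη))
  have hKtouch : ∀ η ∈ K, ((φ η : ℝ) : EReal) ≤ w η := fun η hη =>
    hr₁ η (Metric.ball_subset_ball ((min_le_left _ _).trans (min_le_left _ _)) (hKball hη))
      (hKO hη)
  have hrδ : r < δ := by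
    rw [hrdef]
    have h1 : min (min r₁ r₂) δ ≤ δ := min_le_right _ _
    linarith
  -- Step 3 : choose ε' and ρ
  set B : ℝ := (r/2)^4 with hBdef
  have hBpos : 0 < B := by positivity
  set ε' : ℝ := min δ B / 8 with hε'def
  have hε'pos : 0 < ε' := by
    have := lt_min hδpos hBpos
    positivity
  have hε'δ : 3 * ε' < δ := by
    have h1 : min δ B ≤ δ := min_le_left _ _
    rw [hε'def]; linarith
  have hε'B : 3 * ε' < B := by
    have h1 : min δ B ≤ B := min_le_right _ _
    rw [hε'def]; linarith
  have hev : ∀ᶠ η in nhds ξ₀, qfun ξ₀ η < ε' ∧ |φ η - m0| < ε' := by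
    have h1 : Filter.Tendsto (qfun ξ₀) (nhds ξ₀) (nhds 0) := by
      have := (qfun_contDiff ξ₀).continuous.tendsto ξ₀
      rwa [qfun_self] at this
    have h2 : Filter.Tendsto (fun η => |φ η - m0|) (nhds ξ₀) (nhds 0) := by
      have hca : ContinuousAt φ ξ₀ :=
        hφ.continuousOn.continuousAt (hOopen.mem_nhds hξ₀)
      have : ContinuousAt (fun η => |φ η - m0|) ξ₀ :=
        (hca.sub continuousAt_const).abs
      have h0 : |φ ξ₀ - m0| = (0:ℝ) := by simp [hm0]
      simpa [ContinuousAt, h0] using this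
    exact (h1.eventually (gt_mem_nhds hε'pos)).and (h2.eventually (gt_mem_nhds hε'pos))
  obtain ⟨ρ₀, hρ₀pos, hρ₀⟩ := Metric.eventually_nhds_iff_ball.1 hev
  set ρ : ℝ := min ρ₀ r with hρdef
  have hρpos : 0 < ρ := lt_min hρ₀pos hrpos
  -- Step 4 : pick η₁ and h
  have hIle : (⨅ η ∈ O ∩ Metric.ball ξ₀ ρ, g η) ≤ w ξ₀ := by
    simp only [hw, lscEnv]
    exact le_iSup₂ (f := fun (s : ℝ) (_ : 0 < s) => ⨅ η ∈ O ∩ Metric.ball ξ₀ s, g η) ρ hρpos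
  have hIlt : (⨅ η ∈ O ∩ Metric.ball ξ₀ ρ, g η) < ((m0 + ε' : ℝ) : EReal) := by
    refine lt_of_le_of_lt (hIle.trans_eq heq) ?_
    exact_mod_cast EReal.coe_lt_coe_iff.2 (by linarith)
  obtain ⟨η₁, hη₁mem, hη₁⟩ : ∃ η₁ ∈ O ∩ Metric.ball ξ₀ ρ, g η₁ < ((m0 + ε' : ℝ) : EReal) := by
    by_contra hcon
    push_neg at hcon
    exact (le_iInf₂ hcon).not_gt hIlt
  obtain ⟨h, hh𝓕, hh₁⟩ : ∃ h ∈ 𝓕, h η₁ < ((m0 + ε' : ℝ) : EReal) := by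
    by_contra hcon
    push_neg at hcon
    rw [hg] at hη₁
    exact (le_iInf₂ hcon).not_gt hη₁
  obtain ⟨⟨hlsc, hhbot, -⟩, hhsuper⟩ := h𝓕 h hh𝓕
  -- Step 5 : minimise f := h + (q - φ) over K
  have hKne : K.Nonempty := ⟨ξ₀, Metric.mem_closedBall_self hrpos.le⟩
  have hKcomp : IsCompact K := isCompact_closedBall ξ₀ r
  have hKclosed : IsClosed K := Metric.isClosed_closedBall
  set f : Heis n → EReal := fun η => h η + (((qfun ξ₀ η - φ η : ℝ)) : EReal) with hfdef
  have hflsc : LowerSemicontinuousOn f K := by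
    have hcont2 : ContinuousOn (fun η => (((qfun ξ₀ η - φ η : ℝ)) : EReal)) K :=
      continuous_coe_real_ereal.comp_continuousOn
        (((qfun_contDiff ξ₀).continuous.continuousOn).sub (hφ.continuousOn.mono hKO))
    exact LowerSemicontinuousOn.add' (hlsc.mono hKO) hcont2.lowerSemicontinuousOn
      (fun x hx => EReal.continuousAt_add (Or.inr (EReal.coe_ne_bot _))
        (Or.inr (EReal.coe_ne_top _)))
  obtain ⟨ξ₁, hξ₁K, hmin⟩ := lsc_exists_min hKcomp hKclosed hKne hflsc
  have hξ₁O : ξ₁ ∈ O := hKO hξ₁K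
  -- Step 6 : bounds on f ξ₁
  have hη₁K : η₁ ∈ K :=
    Metric.ball_subset_closedBall (Metric.ball_subset_ball (min_le_right ρ₀ r) hη₁mem.2)
  have hη₁ball : η₁ ∈ Metric.ball ξ₀ ρ₀ := Metric.ball_subset_ball (min_le_left _ _) hη₁mem.2
  obtain ⟨hqη₁, hφη₁⟩ := hρ₀ η₁ hη₁ball
  have hfη₁ : f η₁ < ((3*ε' : ℝ) : EReal) := by
    have h1 : f η₁ < ((m0 + ε' : ℝ) : EReal) + ((qfun ξ₀ η₁ - φ η₁ : ℝ) : EReal) :=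
      EReal.add_lt_add_right_coe hh₁ _
    refine h1.trans_le ?_
    rw [← EReal.coe_add]
    apply EReal.coe_le_coe_iff.2
    have habs := abs_lt.1 hφη₁
    linarith [habs.1, habs.2]
  have hμupper : f ξ₁ < ((3*ε':ℝ) : EReal) := lt_of_le_of_lt (hmin η₁ hη₁K) hfη₁
  have hflow : ∀ η ∈ K, ((qfun ξ₀ η : ℝ) : EReal) ≤ f η := by
    intro η hη
    have h1 : ((φ η : ℝ) : EReal) ≤ h η := (hKtouch η hη).trans (hhw h hh𝓕 η (hKO hη))
    calc ((qfun ξ₀ η : ℝ) : EReal)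
        = ((φ η : ℝ) : EReal) + ((qfun ξ₀ η - φ η : ℝ) : EReal) := by
          rw [← EReal.coe_add]; norm_num
      _ ≤ f η := add_le_add_left h1 _
  have hμlow : ((qfun ξ₀ ξ₁ : ℝ) : EReal) ≤ f ξ₁ := hflow ξ₁ hξ₁K
  have hμbot : f ξ₁ ≠ ⊥ := fun hb =>
    (EReal.coe_ne_bot (qfun ξ₀ ξ₁)) (le_bot_iff.1 (hb ▸ hμlow))
  have hμtop : f ξ₁ ≠ ⊤ := ne_top_of_lt hμupper
  set c : ℝ := (f ξ₁).toReal with hcdef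
  have hcμ : ((c : ℝ) : EReal) = f ξ₁ := EReal.coe_toReal hμtop hμbot
  have hcl : qfun ξ₀ ξ₁ ≤ c := EReal.coe_le_coe_iff.1 (by rw [hcμ]; exact hμlow)
  have hcr : c < 3*ε' := EReal.coe_lt_coe_iff.1 (by rw [hcμ]; exact hμupper)
  have hc0 : 0 ≤ c := (qfun_nonneg ξ₀ ξ₁).trans hcl
  have hdist : dist ξ₁ ξ₀ < r/2 := by
    by_contra hcon
    push_neg at hcon
    have h1 : B ≤ qfun ξ₀ ξ₁ := by
      rw [hBdef]
      exact le_trans (pow_le_pow_left₀ (by positivity) hcon 4) (dist_pow_four_le_qfun ξ₀ ξ₁)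
    linarith
  -- Step 7 : apply the supersolution property of h at ξ₁
  set ψ : Heis n → ℝ := fun η => φ η - qfun ξ₀ η + c with hψdef
  have hψC : ContDiffOn ℝ 2 ψ O :=
    (hφ.sub ((qfun_contDiff ξ₀).of_le le_top).contDiffOn).add contDiffOn_const
  have hψeq : h ξ₁ = ((ψ ξ₁ : ℝ) : EReal) := by
    have hhb : h ξ₁ ≠ ⊥ := hhbot ξ₁ hξ₁O
    have hht : h ξ₁ ≠ ⊤ := by
      intro ht
      apply hμtop
      have hfr : f ξ₁ = h ξ₁ + ((qfun ξ₀ ξ₁ - φ ξ₁ : ℝ) : EReal) := rfl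
      rw [hfr, ht, EReal.top_add_coe]
    have hxe : (((h ξ₁).toReal :ℝ) : EReal) = h ξ₁ := EReal.coe_toReal hht hhb
    have heq2 : (((h ξ₁).toReal + (qfun ξ₀ ξ₁ - φ ξ₁) : ℝ) : EReal) = ((c:ℝ):EReal) := by
      rw [EReal.coe_add, hxe, hcμ]
    have heq3 : (h ξ₁).toReal + (qfun ξ₀ ξ₁ - φ ξ₁) = c := EReal.coe_eq_coe_iff.1 heq2
    rw [← hxe]
    apply congrArg
    simp only [hψdef]
    linarith
  have hevt : ∀ᶠ η in nhds ξ₁, η ∈ O → ((ψ η : ℝ) : EReal) ≤ h η := by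
    have hball : Metric.ball ξ₁ (r/2) ∈ nhds ξ₁ := Metric.ball_mem_nhds _ (by positivity)
    filter_upwards [hball] with η hη _
    have hηK : η ∈ K := by
      rw [hKdef, Metric.mem_closedBall]
      have h1 : dist η ξ₀ ≤ dist η ξ₁ + dist ξ₁ ξ₀ := dist_triangle _ _ _
      have h2 : dist η ξ₁ < r/2 := Metric.mem_ball.1 hη
      linarith
    have hfη : ((c:ℝ):EReal) ≤ f η := by rw [hcμ]; exact hmin η hηK
    by_cases hhtop : h η = ⊤
    · rw [hhtop]; exact le_top
    · have hhb : h η ≠ ⊥ := hhbot η (hKO hηK)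
      have hye : (((h η).toReal:ℝ):EReal) = h η := EReal.coe_toReal hhtop hhb
      have hcc : ((c:ℝ):EReal) ≤ (((h η).toReal + (qfun ξ₀ η - φ η) : ℝ) : EReal) := by
        rw [EReal.coe_add, hye]; exact hfη
      have hcy : c ≤ (h η).toReal + (qfun ξ₀ η - φ η) := EReal.coe_le_coe_iff.1 hcc
      rw [← hye]
      apply EReal.coe_le_coe_iff.2
      simp only [hψdef]
      linarith
  have hnotin : Fop L ψ ξ₁ ∉ S := hhsuper ξ₁ hξ₁O ψ hψC hψeq hevt
  apply hnotin
  have hFop : Fop L ψ ξ₁ = Φ (ξ₁, c) := by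
    have h1 := hGrad_sub_add_const hOopen hφ ((qfun_contDiff ξ₀).of_le le_top) c hξ₁O
    have h2 := hHess_sub_add_const hOopen hφ (qfun_contDiff ξ₀) c hξ₁O
    simp only [Fop, hHessSym, hΦ, hA, hP, hψdef]
    rw [h1, h2]
  rw [hFop]
  refine hδ ?_
  rw [Metric.mem_ball, Prod.dist_eq]
  apply max_lt
  · exact lt_trans hdist (by linarith)
  · rw [Real.dist_eq, sub_zero, abs_of_nonneg hc0]
    linarith
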